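/- Define for γ ∈ [0, 1/2) and λ ∈ (0,1) the exponent ϑ(λ) = (1−γ)(1 − H((H⁻¹(1−λ) − γ/2)/(1−γ))) where H is binary entropy and H⁻¹ its left-branch inverse. Then lim_{λ→0⁺} ϑ(λ)/λ = 1/(1−γ). -/

import Mathlib

open Filter

/-- Binary entropy function (base-2 logarithm), with `H 0 = H 1 = 0`. -/
noncomputable def binH (x : ℝ) : ℝ := -x * Real.logb 2 x - (1 - x) * Real.logb 2 (1 - x)

/-!
Put `t = H⁻¹(1 - λ)`; then `λ = 1 - H t`, and `t → 1/2⁻` as `λ → 0⁺` because `H⁻¹` is monotone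
with an interval as image. Since `H` has a nondegenerate maximum at `1/2`,
`1 - H (1/2 + ε) ~ 2ε² / log 2`. The argument `(t - γ/2)/(1 - γ)` is `1/2 + (t - 1/2)/(1 - γ)`, so
`1 - H` of it is asymptotic to `(1 - γ)⁻² (1 - H t)`, and `ϑ(λ)/λ → (1 - γ)(1 - γ)⁻² = (1 - γ)⁻¹`.
-/

open Topology Set Real

theorem tendsto_div_sq_of_hasDerivAt_of_hasDerivAt {f f' : ℝ → ℝ} {a L : ℝ}
    (hf : ∀ᶠ x in 𝓝 a, HasDerivAt f (f' x) x) (hf' : HasDerivAt f' L a)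
    (hfa : f a = 0) (hf'a : f' a = 0) :
    Tendsto (fun x => f x / (x - a) ^ 2) (𝓝[≠] a) (𝓝 (L / 2)) := by
  have hg : ∀ x, HasDerivAt (fun x => (x - a) ^ 2) (2 * (x - a)) x := fun x => by
    simpa using ((hasDerivAt_id' x).sub_const a).fun_pow 2
  refine HasDerivAt.lhopital_zero_nhdsNE (nhdsWithin_le_nhds hf) (.of_forall hg) ?_ ?_ ?_ ?_
  · filter_upwards [self_mem_nhdsWithin] with x hx
    exact mul_ne_zero two_ne_zero (sub_ne_zero.2 hx)
  · simpa [hfa] using hf.self_of_nhds.continuousAt.tendsto.mono_left nhdsWithin_le_nhds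
  · exact ((Continuous.tendsto' (by fun_prop) a 0 (by simp))).mono_left nhdsWithin_le_nhds
  · refine ((hasDerivAt_iff_tendsto_slope.1 hf').div_const 2).congr' ?_
    filter_upwards [self_mem_nhdsWithin] with x hx
    rw [slope_def_field, hf'a, sub_zero, div_div, mul_comm]

theorem tendsto_comp_affine_div_of_tendsto_div_sq {f : ℝ → ℝ} {a k L : ℝ} (hk : k ≠ 0)
    (hL : L ≠ 0) (hf : Tendsto (fun x => f x / (x - a) ^ 2) (𝓝[≠] a) (𝓝 L)) :
    Tendsto (fun x => f (a + k * (x - a)) / f x) (𝓝[≠] a) (𝓝 (k ^ 2)) := by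
  have haffine : Tendsto (fun x => a + k * (x - a)) (𝓝[≠] a) (𝓝[≠] a) := by
    refine tendsto_nhdsWithin_of_tendsto_nhds_of_eventually_within _
      ((Continuous.tendsto' (by fun_prop) a a (by simp)).mono_left nhdsWithin_le_nhds) ?_
    filter_upwards [self_mem_nhdsWithin] with x hx
    simpa [sub_eq_zero] using And.intro hk hx
  have := ((hf.comp haffine).mul_const (k ^ 2)).div hf hL
  rw [mul_div_cancel_left₀ _ hL] at this
  refine this.congr' ?_
  filter_upwards [self_mem_nhdsWithin] with x hx
  have hx : x - a ≠ 0 := sub_ne_zero.2 hx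
  simp only [Pi.div_apply, Function.comp, add_sub_cancel_left, mul_pow]
  field_simp

theorem tendsto_log_two_sub_binEntropy_div_sq :
    Tendsto (fun p => (log 2 - binEntropy p) / (p - 2⁻¹) ^ 2) (𝓝[≠] 2⁻¹) (𝓝 2) := by
  have hderiv : ∀ᶠ p in 𝓝 2⁻¹,
      HasDerivAt (fun p => log 2 - binEntropy p) (log p - log (1 - p)) p := by
    filter_upwards [eventually_ne_nhds (show (2⁻¹ : ℝ) ≠ 0 by norm_num),
      eventually_ne_nhds (show (2⁻¹ : ℝ) ≠ 1 by norm_num)] with p h0 h1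
    simpa using (hasDerivAt_binEntropy h0 h1).const_sub (log 2)
  have hderiv2 : HasDerivAt (fun p => log p - log (1 - p)) 4 2⁻¹ :=
    (((hasDerivAt_id' _).log (by norm_num)).fun_sub
      (((hasDerivAt_id' _).const_sub 1).log (by norm_num))).congr_deriv (by norm_num)
  convert tendsto_div_sq_of_hasDerivAt_of_hasDerivAt hderiv hderiv2 (by simp) (by norm_num)
  norm_num

lemma binH_eq_binEntropy_div (x : ℝ) : binH x = binEntropy x / log 2 := by
  unfold binH binEntropy logb
  rw [log_inv, log_inv]
  ring

lemma one_sub_binH (x : ℝ) : 1 - binH x = (log 2 - binEntropy x) / log 2 := by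
  rw [binH_eq_binEntropy_div, sub_div, div_self (log_pos one_lt_two).ne']

lemma binH_zero : binH 0 = 0 := by simp [binH_eq_binEntropy_div]

lemma binH_half : binH (1 / 2) = 1 := by
  rw [binH_eq_binEntropy_div, one_div, binEntropy_two_inv, div_self (log_pos one_lt_two).ne']

lemma binH_strictMonoOn : StrictMonoOn binH (Icc 0 (1 / 2)) := by
  intro a ha b hb hab
  rw [binH_eq_binEntropy_div, binH_eq_binEntropy_div]
  rw [one_div] at ha hb
  exact div_lt_div_of_pos_right (binEntropy_strictMonoOn ha hb hab) (log_pos one_lt_two)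

theorem tendsto_nhdsLT_of_strictMonoOn_of_rightInvOn {g h : ℝ → ℝ} {a b : ℝ} (hab : a < b)
    (hg : StrictMonoOn g (Icc a b)) (hmaps : MapsTo h (Icc (g a) (g b)) (Icc a b))
    (hinv : RightInvOn h g (Icc (g a) (g b))) :
    Tendsto h (𝓝[<] g b) (𝓝[<] b) := by
  have hgab : g a < g b := hg (left_mem_Icc.2 hab.le) (right_mem_Icc.2 hab.le) hab
  have hgb : g b ∈ Icc (g a) (g b) := right_mem_Icc.2 hgab.le
  have hmono : MonotoneOn h (Icc (g a) (g b)) := fun y hy y' hy' hyy' => by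
    rwa [← hg.le_iff_le (hmaps hy) (hmaps hy'), hinv hy, hinv hy']
  have hhb : h (g b) = b := hg.injOn (hmaps hgb) (right_mem_Icc.2 hab.le) (hinv hgb)
  have himage : Icc a b ⊆ h '' Icc (g a) (g b) := fun x hx => by
    have hgx : g x ∈ Icc (g a) (g b) :=
      ⟨hg.monotoneOn (left_mem_Icc.2 hab.le) hx hx.1, hg.monotoneOn hx (right_mem_Icc.2 hab.le) hx.2⟩
    exact ⟨g x, hgx, hg.injOn (hmaps hgx) hx (hinv hgx)⟩
  have hcont : ContinuousWithinAt h (Iic (g b)) (g b) :=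
    continuousWithinAt_left_of_monotoneOn_of_image_mem_nhdsWithin hmono (Icc_mem_nhdsLE hgab)
      (by rw [hhb]; exact mem_of_superset (Icc_mem_nhdsLE hab) himage)
  refine tendsto_nhdsWithin_of_tendsto_nhds_of_eventually_within _
    (by simpa only [hhb] using (hcont.mono Iio_subset_Iic_self).tendsto) ?_
  filter_upwards [Ioo_mem_nhdsLT hgab] with y hy
  have hy' : y ∈ Icc (g a) (g b) := Ioo_subset_Icc_self hy
  refine (hmaps hy').2.lt_of_ne fun heq => hy.2.ne ?_
  rw [← hinv hy', heq]

theorem tendsto_one_sub_binH_affine_div_one_sub_binH {γ : ℝ} (hγ : 1 - γ ≠ 0) :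
    Tendsto (fun t => (1 - γ) * (1 - binH ((t - γ / 2) / (1 - γ))) / (1 - binH t))
      (𝓝[≠] (1 / 2)) (𝓝 (1 / (1 - γ))) := by
  rw [one_div 2]
  have h := (tendsto_comp_affine_div_of_tendsto_div_sq (inv_ne_zero hγ) two_ne_zero
    tendsto_log_two_sub_binEntropy_div_sq).const_mul (1 - γ)
  rw [show (1 - γ) * (1 - γ)⁻¹ ^ 2 = 1 / (1 - γ) by field_simp] at h
  refine h.congr fun t => ?_
  have haffine : (t - γ / 2) / (1 - γ) = 2⁻¹ + (1 - γ)⁻¹ * (t - 2⁻¹) := by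
    field_simp
    ring
  rw [one_sub_binH, one_sub_binH, haffine, mul_div_assoc,
    div_div_div_cancel_right₀ (log_pos one_lt_two).ne']

theorem stmt_14_general (γ : ℝ) (hγ1 : γ < 1 / 2)
    (Hinv : ℝ → ℝ)
    (hHinv : ∀ y ∈ Set.Icc (0 : ℝ) 1, Hinv y ∈ Set.Icc (0 : ℝ) (1 / 2) ∧ binH (Hinv y) = y) :
    Tendsto (fun lam : ℝ =>
        ((1 - γ) * (1 - binH ((Hinv (1 - lam) - γ / 2) / (1 - γ)))) / lam)
      (nhdsWithin 0 (Set.Ioi 0)) (nhds (1 / (1 - γ))) := by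
  have hHinv_tendsto : Tendsto Hinv (𝓝[<] 1) (𝓝[<] (1 / 2)) := by
    have := tendsto_nhdsLT_of_strictMonoOn_of_rightInvOn (by norm_num) binH_strictMonoOn
      (h := Hinv) (by rw [binH_zero, binH_half]; exact fun y hy => (hHinv y hy).1)
      (by rw [binH_zero, binH_half]; exact fun y hy => (hHinv y hy).2)
    rwa [binH_half] at this
  have hone_sub : Tendsto (fun lam : ℝ => 1 - lam) (𝓝[>] 0) (𝓝[<] 1) := by
    have := (map_subLeft_nhdsGT (c := (1 : ℝ)) (a := 0)).le
    rwa [sub_zero] at this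
  have hlim := (tendsto_one_sub_binH_affine_div_one_sub_binH (by linarith)).comp <|
    tendsto_nhdsWithin_mono_right (fun _ hx => ne_of_lt hx) (hHinv_tendsto.comp hone_sub)
  refine hlim.congr' ?_
  filter_upwards [Ioo_mem_nhdsGT zero_lt_one] with lam hlam
  rw [Function.comp_apply, Function.comp_apply,
    (hHinv (1 - lam) ⟨by linarith [hlam.2], by linarith [hlam.1]⟩).2, sub_sub_cancel]

theorem stmt_14 (γ : ℝ) (hγ0 : 0 ≤ γ) (hγ1 : γ < 1 / 2)
    (Hinv : ℝ → ℝ)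
    (hHinv : ∀ y ∈ Set.Icc (0 : ℝ) 1, Hinv y ∈ Set.Icc (0 : ℝ) (1 / 2) ∧ binH (Hinv y) = y) :
    Tendsto (fun lam : ℝ =>
        ((1 - γ) * (1 - binH ((Hinv (1 - lam) - γ / 2) / (1 - γ)))) / lam)
      (nhdsWithin 0 (Set.Ioi 0)) (nhds (1 / (1 - γ))) :=
  stmt_14_general γ hγ1 Hinv hHinv
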